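/- arXiv:1802.04072 — 5 statements merged into one kernel-verified Lean document; each statement's English description precedes it below -/
import Mathlib

section
/- Let K be a field and let (A₁, R_A), (B₁, R_B), (C₁, R_C) be quadratic data over K. Then the canonical tensor-hom adjunction bijection between K-linear maps A₁ ⊗ B₁ → C₁ and K-linear maps A₁ → B₁* ⊗ C₁ restricts to a bijection between the set of morphisms of quadratic data from the black product (A₁ ⊗ B₁, S₍₂₃₎(R_A ⊗ R_B)) to (C₁, R_C) and the set of morphisms of quadratic data from (A₁, R_A) to the white product (B₁* ⊗ C₁, S₍₂₃₎(R_A(B)^⊥ ⊗ (C₁ ⊗ C₁) + (B₁* ⊗ B₁*) ⊗ R_C)), where R_A(B)^⊥ denotes the annihilator R_B^⊥ of R_B. In other words, Hom_QA(A • B, C) = Hom_QA(A, B^! ∘ C). -/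
open TensorProduct Module

noncomputable section

/-- The image of `R ⊗ S` inside `A ⊗[K] B`, for subspaces `R ⊆ A`, `S ⊆ B`. -/
def subTensor (K : Type) [Field K] {A B : Type} [AddCommMonoid A] [AddCommMonoid B]
    [Module K A] [Module K B] (R : Submodule K A) (S : Submodule K B) :
    Submodule K (A ⊗[K] B) :=
  LinearMap.range (TensorProduct.map R.subtype S.subtype)

/-- The relation space `S₍₂₃₎(R ⊗ S)` of the black product of the quadratic data
`(V, R)` and `(W, S)`. -/
def blackRel (K : Type) [Field K] {V W : Type} [AddCommMonoid V] [AddCommMonoid W]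
    [Module K V] [Module K W] (R : Submodule K (V ⊗[K] V)) (S : Submodule K (W ⊗[K] W)) :
    Submodule K ((V ⊗[K] W) ⊗[K] (V ⊗[K] W)) :=
  Submodule.map (TensorProduct.tensorTensorTensorComm K V V W W).toLinearMap
    (subTensor K R S)

/-- The relation space `S₍₂₃₎(R ⊗ (W ⊗ W) + (V ⊗ V) ⊗ S)` of the white product of the
quadratic data `(V, R)` and `(W, S)`. -/
def whiteRel (K : Type) [Field K] {V W : Type} [AddCommMonoid V] [AddCommMonoid W]
    [Module K V] [Module K W] (R : Submodule K (V ⊗[K] V)) (S : Submodule K (W ⊗[K] W)) :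
    Submodule K ((V ⊗[K] W) ⊗[K] (V ⊗[K] W)) :=
  Submodule.map (TensorProduct.tensorTensorTensorComm K V V W W).toLinearMap
    (subTensor K R (⊤ : Submodule K (W ⊗[K] W)) ⊔ subTensor K (⊤ : Submodule K (V ⊗[K] V)) S)

/-- The annihilator `R^⊥ ⊆ V* ⊗ V*` of a subspace `R ⊆ V ⊗ V`, under the canonical
pairing of `V* ⊗ V*` with `V ⊗ V`. -/
def annRel (K : Type) [Field K] {V : Type} [AddCommMonoid V] [Module K V]
    (R : Submodule K (V ⊗[K] V)) :
    Submodule K (Module.Dual K V ⊗[K] Module.Dual K V) :=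
  Submodule.comap (TensorProduct.dualDistrib K V V) R.dualAnnihilator

/-- `f` is a morphism of quadratic data `(V, R) → (W, S)`:  `(f ⊗ f)(R) ⊆ S`. -/
def IsQuadMor (K : Type) [Field K] {V W : Type} [AddCommMonoid V] [AddCommMonoid W]
    [Module K V] [Module K W] (R : Submodule K (V ⊗[K] V)) (S : Submodule K (W ⊗[K] W))
    (f : V →ₗ[K] W) : Prop :=
  Submodule.map (TensorProduct.map f f) R ≤ S

/-!
Both sides reduce to a condition on pairs `r ∈ R_A`, `s ∈ R_B`. For the black product,
`f ⊗ f` must send `S₂₃(r ⊗ s)` into `R_C`. For the white product: over a field, for subspaces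
`P ⊆ X`, `Q ⊆ Y`, `P ⊗ Y + X ⊗ Q` is the kernel of `X ⊗ Y → X/P ⊗ Y/Q`; when `P = R_B^⊥ ⊆ B* ⊗ B*` we have
`X/P ↪ R_B*`, so this kernel is detected by contracting the `B* ⊗ B*` factor against every
`s ∈ R_B`. Contracting `(g ⊗ g)(r)` against `s`, for `g` the adjoint of `f`, gives back
`(f ⊗ f)(S₂₃(r ⊗ s))`, so the two conditions coincide.
-/

section

open LinearMap

variable {K : Type} [Field K]

lemma subTensor_eq_map₂ {X Y : Type} [AddCommMonoid X] [AddCommMonoid Y]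
    [Module K X] [Module K Y] (P : Submodule K X) (Q : Submodule K Y) :
    subTensor K P Q = Submodule.map₂ (TensorProduct.mk K X Y) P Q :=
  range_mapIncl P Q

lemma map_subTensor_le_iff {X Y Z : Type} [AddCommMonoid X] [AddCommMonoid Y]
    [AddCommMonoid Z] [Module K X] [Module K Y] [Module K Z]
    (P : Submodule K X) (Q : Submodule K Y) (T : Submodule K Z) (Φ : X ⊗[K] Y →ₗ[K] Z) :
    (subTensor K P Q).map Φ ≤ T ↔ ∀ p ∈ P, ∀ q ∈ Q, Φ (p ⊗ₜ q) ∈ T := by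
  rw [Submodule.map_le_iff_le_comap, subTensor_eq_map₂, Submodule.map₂_le]
  rfl

lemma isQuadMor_blackRel_iff {V W Z : Type} [AddCommMonoid V] [AddCommMonoid W]
    [AddCommMonoid Z] [Module K V] [Module K W] [Module K Z]
    (R : Submodule K (V ⊗[K] V)) (S : Submodule K (W ⊗[K] W)) (T : Submodule K (Z ⊗[K] Z))
    (f : V ⊗[K] W →ₗ[K] Z) :
    IsQuadMor K (blackRel K R S) T f ↔ ∀ r ∈ R, ∀ s ∈ S,
      TensorProduct.map f f (TensorProduct.tensorTensorTensorComm K V V W W (r ⊗ₜ s)) ∈ T := by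
  rw [IsQuadMor, blackRel, ← Submodule.map_comp, map_subTensor_le_iff]
  rfl

lemma subTensor_top_right {X Y : Type} [AddCommMonoid X] [AddCommMonoid Y]
    [Module K X] [Module K Y] (P : Submodule K X) :
    subTensor K P (⊤ : Submodule K Y) = range (P.subtype.rTensor Y) := by
  rw [subTensor_eq_map₂, rTensor, range_map, Submodule.range_subtype, range_id]

lemma subTensor_top_left {X Y : Type} [AddCommMonoid X] [AddCommMonoid Y]
    [Module K X] [Module K Y] (Q : Submodule K Y) :
    subTensor K (⊤ : Submodule K X) Q = range (Q.subtype.lTensor X) := by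
  rw [subTensor_eq_map₂, lTensor, range_map, Submodule.range_subtype, range_id]

lemma ker_map_eq_sup_subTensor {X Y X' Y' : Type} [AddCommGroup X] [AddCommGroup Y]
    [AddCommGroup X'] [AddCommGroup Y'] [Module K X] [Module K Y] [Module K X'] [Module K Y']
    (φ : X →ₗ[K] X') (ψ : Y →ₗ[K] Y') :
    ker (TensorProduct.map φ ψ) = subTensor K (ker φ) ⊤ ⊔ subTensor K ⊤ (ker ψ) := by
  have hfactor : TensorProduct.map φ ψ = TensorProduct.map ((ker φ).liftQ φ le_rfl)
      ((ker ψ).liftQ ψ le_rfl) ∘ₗ TensorProduct.map (ker φ).mkQ (ker ψ).mkQ := by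
    rw [← TensorProduct.map_comp, Submodule.liftQ_mkQ, Submodule.liftQ_mkQ]
  have hinj : Function.Injective (TensorProduct.map ((ker φ).liftQ φ le_rfl)
      ((ker ψ).liftQ ψ le_rfl)) :=
    TensorProduct.map_injective_of_flat_flat _ _
      (ker_eq_bot.mp (Submodule.ker_liftQ_eq_bot' _ _ rfl))
      (ker_eq_bot.mp (Submodule.ker_liftQ_eq_bot' _ _ rfl))
  rw [hfactor, ker_comp, ker_eq_bot.mpr hinj, Submodule.comap_bot,
    TensorProduct.map_ker (exact_subtype_mkQ _) (Submodule.mkQ_surjective _)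
      (exact_subtype_mkQ _) (Submodule.mkQ_surjective _),
    subTensor_top_right, subTensor_top_left, sup_comm]

lemma mem_sup_subTensor_ker_iff {X Y N : Type} [AddCommMonoid X] [AddCommMonoid Y]
    [AddCommGroup N] [Module K X] [Module K Y] [Module K N] [FiniteDimensional K N]
    (φ : X →ₗ[K] Dual K N) (Q : Submodule K Y) (w : X ⊗[K] Y) :
    w ∈ subTensor K (ker φ) ⊤ ⊔ subTensor K ⊤ Q ↔
      ∀ n : N, TensorProduct.lid K Y (φ.flip n |>.rTensor Y w) ∈ Q := by
  let := Module.addCommMonoidToAddCommGroup K (M := X)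
  let := Module.addCommMonoidToAddCommGroup K (M := Y)
  have hpoint : ∀ n : N, dualTensorHom K N (Y ⧸ Q) (TensorProduct.map φ Q.mkQ w) n =
      Q.mkQ (TensorProduct.lid K Y (φ.flip n |>.rTensor Y w)) := by
    intro n
    induction w using TensorProduct.induction_on with
    | zero => simp
    | tmul x y => simp
    | add w w' hw hw' => simp only [map_add, LinearMap.add_apply, hw, hw']
  have hker := ker_map_eq_sup_subTensor φ Q.mkQ
  rw [Q.ker_mkQ] at hker
  rw [← hker, mem_ker, ← (dualTensorHom_bijective (R := K) (M := N) (N := Y ⧸ Q)).1.eq_iff,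
    map_zero, LinearMap.ext_iff]
  simp only [hpoint, LinearMap.zero_apply, Submodule.mkQ_apply, Submodule.Quotient.mk_eq_zero]

lemma annRel_eq_ker {V : Type} [AddCommMonoid V] [Module K V] (R : Submodule K (V ⊗[K] V)) :
    annRel K R = ker (R.subtype.dualMap ∘ₗ TensorProduct.dualDistrib K V V) := by
  rw [ker_comp, ker_dualMap_eq_dualAnnihilator_range, Submodule.range_subtype, annRel]

/-- `(φ ⊗ w) ⊗ (ψ ⊗ w') ↦ ⟨φ ⊗ ψ, s⟩ • (w ⊗ w')`. -/
def contractDual {V W : Type} [AddCommMonoid V] [AddCommMonoid W] [Module K V] [Module K W]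
    (s : V ⊗[K] V) : (Dual K V ⊗[K] W) ⊗[K] (Dual K V ⊗[K] W) →ₗ[K] W ⊗[K] W :=
  (TensorProduct.lid K (W ⊗[K] W)).toLinearMap ∘ₗ
    ((TensorProduct.dualDistrib K V V).flip s).rTensor (W ⊗[K] W) ∘ₗ
    (TensorProduct.tensorTensorTensorComm K (Dual K V) (Dual K V) W W).symm.toLinearMap

lemma mem_whiteRel_annRel_iff {V W : Type} [AddCommGroup V] [AddCommGroup W]
    [Module K V] [Module K W] [FiniteDimensional K V]
    (R : Submodule K (V ⊗[K] V)) (S : Submodule K (W ⊗[K] W))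
    (x : (Dual K V ⊗[K] W) ⊗[K] (Dual K V ⊗[K] W)) :
    x ∈ whiteRel K (annRel K R) S ↔ ∀ s ∈ R, contractDual s x ∈ S := by
  rw [whiteRel, Submodule.mem_map_equiv, annRel_eq_ker]
  exact (mem_sup_subTensor_ker_iff _ S _).trans Subtype.forall

lemma contractDual_tmul_tmul {V W : Type} [AddCommMonoid V] [AddCommMonoid W]
    [Module K V] [Module K W] (v v' : V) (x y : Dual K V ⊗[K] W) :
    contractDual (v ⊗ₜ v') (x ⊗ₜ y) = dualTensorHom K V W x v ⊗ₜ dualTensorHom K V W y v' := by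
  induction x using TensorProduct.induction_on with
  | zero => simp
  | add x x' hx hx' => simp only [TensorProduct.add_tmul, map_add, LinearMap.add_apply, hx, hx']
  | tmul φ w =>
    induction y using TensorProduct.induction_on with
    | zero => simp
    | add y y' hy hy' => simp only [TensorProduct.tmul_add, map_add, LinearMap.add_apply, hy, hy']
    | tmul ψ w' =>
      simp only [contractDual, coe_comp, LinearEquiv.coe_coe, Function.comp_apply,
        TensorProduct.tensorTensorTensorComm_symm, TensorProduct.tensorTensorTensorComm_tmul,
        rTensor_tmul, flip_apply, TensorProduct.dualDistrib_apply, TensorProduct.lid_tmul,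
        dualTensorHom_apply, TensorProduct.tmul_smul]
      rw [← TensorProduct.smul_tmul', smul_smul, mul_comm (ψ v')]

lemma contractDual_map_map {A B C : Type} [AddCommMonoid A] [AddCommMonoid B] [AddCommMonoid C]
    [Module K A] [Module K B] [Module K C] {f : A ⊗[K] B →ₗ[K] C} {g : A →ₗ[K] Dual K B ⊗[K] C}
    (hg : ∀ a b, dualTensorHom K B C (g a) b = f (a ⊗ₜ b)) (r : A ⊗[K] A) (s : B ⊗[K] B) :
    contractDual s (TensorProduct.map g g r) =
      TensorProduct.map f f (TensorProduct.tensorTensorTensorComm K A A B B (r ⊗ₜ s)) := by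
  induction s using TensorProduct.induction_on with
  | zero => simp [contractDual]
  | add s s' hs hs' =>
    rw [TensorProduct.tmul_add, map_add, map_add, ← hs, ← hs']
    simp only [contractDual, map_add, rTensor_add, coe_comp, Function.comp_apply,
      LinearMap.add_apply]
  | tmul b b' =>
    induction r using TensorProduct.induction_on with
    | zero => simp
    | add r r' hr hr' => simp only [map_add, TensorProduct.add_tmul, hr, hr']
    | tmul a a' => simp [contractDual_tmul_tmul, hg]

lemma dualTensorHom_dualTensorHomEquiv_symm_curry {A B C : Type} [AddCommGroup A]
    [AddCommGroup B] [AddCommGroup C] [Module K A] [Module K B] [Module K C]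
    [FiniteDimensional K B] (f : A ⊗[K] B →ₗ[K] C) (a : A) (b : B) :
    dualTensorHom K B C
        (((dualTensorHomEquiv K B C).symm.toLinearMap ∘ₗ TensorProduct.curry f) a) b =
      f (a ⊗ₜ b) :=
  LinearMap.congr_fun ((dualTensorHomEquiv K B C).apply_symm_apply (TensorProduct.curry f a)) b

end

theorem black_white_internal_hom_adjunction_general (K : Type) [Field K]
    (A B C : Type) [AddCommGroup A] [AddCommGroup B] [AddCommGroup C] [Module K A] [Module K B] [Module K C] [FiniteDimensional K B]
    (RA : Submodule K (A ⊗[K] A)) (RB : Submodule K (B ⊗[K] B)) (RC : Submodule K (C ⊗[K] C))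
    (f : (A ⊗[K] B) →ₗ[K] C) :
    IsQuadMor K (blackRel K RA RB) RC f ↔
      IsQuadMor K RA (whiteRel K (annRel K RB) RC)
        ((dualTensorHomEquiv K B C).symm.toLinearMap ∘ₗ TensorProduct.curry f) := by
  rw [isQuadMor_blackRel_iff, IsQuadMor, Submodule.map_le_iff_le_comap]
  refine forall₂_congr fun r _ => ?_
  rw [Submodule.mem_comap, mem_whiteRel_annRel_iff]
  simp only [contractDual_map_map (dualTensorHom_dualTensorHomEquiv_symm_curry f)]

/-- Hom_QA(A • B, C) = Hom_QA(A, B^! ∘ C): the tensor-hom adjunction restricts to a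
bijection between morphisms of quadratic data out of the black product and morphisms
into the white product `B^! ∘ C`. -/
theorem black_white_internal_hom_adjunction (K : Type) [Field K]
    (A B C : Type) [AddCommGroup A] [AddCommGroup B] [AddCommGroup C] [Module K A] [Module K B] [Module K C] [FiniteDimensional K A] [FiniteDimensional K B] [FiniteDimensional K C]
    (RA : Submodule K (A ⊗[K] A)) (RB : Submodule K (B ⊗[K] B)) (RC : Submodule K (C ⊗[K] C))
    (f : (A ⊗[K] B) →ₗ[K] C) :
    IsQuadMor K (blackRel K RA RB) RC f ↔
      IsQuadMor K RA (whiteRel K (annRel K RB) RC)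
        ((dualTensorHomEquiv K B C).symm.toLinearMap ∘ₗ TensorProduct.curry f) :=
  black_white_internal_hom_adjunction_general K A B C RA RB RC f

end
end

section
/- Let K be a field and let (V, R) be a quadratic datum over K. Let d ∈ V* ⊗ V be the coevaluation element, i.e. the tensor corresponding to the identity map of V under the canonical isomorphism Hom_K(V, V) ≅ V* ⊗ V. Then S₍₂₃₎(d ⊗ d) lies in the subspace R^⊥ ⊗ (V ⊗ V) + (V* ⊗ V*) ⊗ R of (V* ⊗ V*) ⊗ (V ⊗ V). (This element is the Kelly identity element j : K[t]/(t²) → V^! ∘ V of the QA-enrichment.) -/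
/-! Identify `(V* ⊗ V*) ⊗ (V ⊗ V)` with `End(V ⊗ V)` through `V* ⊗ V* ≅ (V ⊗ V)*`; then
`S₍₂₃₎(d ⊗ d)` becomes the coevaluation element of `W = V ⊗ V`, i.e. the identity of `W`.
Splitting `id_W = (id_W - p) + p` with `p` a projection onto `R`, the map `id_W - p` kills `R`,
so it factors through `W ⧸ R` and lies in `R^⊥ ⊗ W`, while `p` has range in `R`, so it lies in
`W* ⊗ R`. -/

open TensorProduct Module

noncomputable section

open LinearMap

section SubTensor

variable {K : Type} [Field K] {A B C D : Type} [AddCommMonoid A] [AddCommMonoid B]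
  [AddCommMonoid C] [AddCommMonoid D] [Module K A] [Module K B] [Module K C] [Module K D]

theorem map_mem_subTensor {S : Submodule K A} {T : Submodule K B} {f : C →ₗ[K] A}
    {g : D →ₗ[K] B} (hf : ∀ x, f x ∈ S) (hg : ∀ y, g y ∈ T) (w : C ⊗[K] D) :
    TensorProduct.map f g w ∈ subTensor K S T := by
  have hfactor : TensorProduct.map f g =
      TensorProduct.map S.subtype T.subtype ∘ₗ
        TensorProduct.map (f.codRestrict S hf) (g.codRestrict T hg) := by
    rw [← TensorProduct.map_comp]; rfl
  rw [hfactor]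
  exact mem_range_self _ _

theorem map_subTensor_le {S : Submodule K A} {T : Submodule K B} {S' : Submodule K C}
    {T' : Submodule K D} {f : A →ₗ[K] C} {g : B →ₗ[K] D} (hf : S.map f ≤ S')
    (hg : T.map g ≤ T') :
    (subTensor K S T).map (TensorProduct.map f g) ≤ subTensor K S' T' := by
  rintro _ ⟨_, ⟨w, rfl⟩, rfl⟩
  rw [← comp_apply, ← TensorProduct.map_comp]
  exact map_mem_subTensor (fun x : S => hf ⟨x, x.2, rfl⟩) (fun y : T => hg ⟨y, y.2, rfl⟩) w

end SubTensor

theorem dualTensorHom_map_dualDistrib_tensorTensorTensorComm {R M N P Q : Type}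
    [CommSemiring R] [AddCommMonoid M] [AddCommMonoid N] [AddCommMonoid P] [AddCommMonoid Q]
    [Module R M] [Module R N] [Module R P] [Module R Q]
    (a : Dual R M ⊗[R] P) (b : Dual R N ⊗[R] Q) :
    dualTensorHom R (M ⊗[R] N) (P ⊗[R] Q)
        (TensorProduct.map (dualDistrib R M N) LinearMap.id
          (tensorTensorTensorComm R (Dual R M) P (Dual R N) Q (a ⊗ₜ b))) =
      TensorProduct.map (dualTensorHom R M P a) (dualTensorHom R N Q b) := by
  induction a using TensorProduct.induction_on with
  | zero => simp
  | add a a' ha ha' => simp only [add_tmul, map_add, ha, ha', TensorProduct.map_add_left]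
  | tmul f p =>
    induction b using TensorProduct.induction_on with
    | zero => simp
    | add b b' hb hb' => simp only [tmul_add, map_add, hb, hb', TensorProduct.map_add_right]
    | tmul g q =>
      simp only [tensorTensorTensorComm_tmul, TensorProduct.map_tmul, id_apply, map_dualTensorHom]

section Coevaluation

variable {K : Type} [Field K] {M N : Type} [AddCommGroup M] [AddCommGroup N] [Module K M]
  [Module K N] [FiniteDimensional K M]

theorem dualTensorHomEquiv_symm_mem_subTensor_top {S : Submodule K N} {f : M →ₗ[K] N}
    (hf : range f ≤ S) : (dualTensorHomEquiv K M N).symm f ∈ subTensor K ⊤ S := by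
  set g := f.codRestrict S fun x => hf (mem_range_self f x)
  have hlift : (dualTensorHomEquiv K M N).symm f =
      S.subtype.lTensor _ ((dualTensorHomEquiv K M S).symm g) := by
    rw [LinearEquiv.symm_apply_eq]
    change f = (dualTensorHom K M N ∘ₗ S.subtype.lTensor _) _
    rw [dualTensorHom_comp_lTensor, comp_apply]
    change f = S.subtype ∘ₗ dualTensorHomEquiv K M S _
    rw [LinearEquiv.apply_symm_apply]
    rfl
  rw [hlift]
  exact map_mem_subTensor (fun _ => Submodule.mem_top) (fun y => y.2) _

theorem dualTensorHomEquiv_symm_mem_subTensor_dualAnnihilator {R : Submodule K M}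
    {f : M →ₗ[K] N} (hf : R ≤ ker f) :
    (dualTensorHomEquiv K M N).symm f ∈ subTensor K R.dualAnnihilator ⊤ := by
  have hlift : (dualTensorHomEquiv K M N).symm f =
      R.mkQ.dualMap.rTensor _ ((dualTensorHomEquiv K (M ⧸ R) N).symm (R.liftQ f hf)) := by
    rw [LinearEquiv.symm_apply_eq]
    change f = (dualTensorHom K M N ∘ₗ R.mkQ.dualMap.rTensor _) _
    rw [dualTensorHom_comp_rTensor_dualMap, comp_apply]
    change f = dualTensorHomEquiv K (M ⧸ R) N _ ∘ₗ R.mkQ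
    rw [LinearEquiv.apply_symm_apply, R.liftQ_mkQ]
  rw [hlift]
  exact map_mem_subTensor
    (fun φ => R.range_dualMap_mkQ_eq ▸ mem_range_self R.mkQ.dualMap φ)
    (fun _ => Submodule.mem_top) _

theorem dualTensorHomEquiv_symm_id_mem_sup (R : Submodule K M) :
    (dualTensorHomEquiv K M M).symm LinearMap.id ∈
      subTensor K R.dualAnnihilator ⊤ ⊔ subTensor K ⊤ R := by
  obtain ⟨p, hp⟩ := R.subtype.exists_leftInverse_of_injective R.ker_subtype
  rw [← sub_add_cancel LinearMap.id (R.subtype ∘ₗ p), map_add]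
  refine Submodule.add_mem_sup
    (dualTensorHomEquiv_symm_mem_subTensor_dualAnnihilator fun x hx => ?_)
    (dualTensorHomEquiv_symm_mem_subTensor_top
      ((range_comp_le_range p R.subtype).trans_eq R.range_subtype))
  have hpx : p x = ⟨x, hx⟩ := congr($hp ⟨x, hx⟩)
  simp [hpx]

end Coevaluation

/-- The coevaluation element `d ∈ V* ⊗ V` (corresponding to the identity of `V`)
satisfies `S₍₂₃₎(d ⊗ d) ∈ R^⊥ ⊗ (V ⊗ V) + (V* ⊗ V*) ⊗ R`: Kelly's identity element
`j : K[t]/(t²) → V^! ∘ V`. -/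
theorem coevaluation_mem_white_relation (K : Type) [Field K]
    (V : Type) [AddCommGroup V] [Module K V] [FiniteDimensional K V]
    (R : Submodule K (V ⊗[K] V)) (d : Module.Dual K V ⊗[K] V)
    (hd : dualTensorHomEquiv K V V d = LinearMap.id) :
    TensorProduct.tensorTensorTensorComm K (Module.Dual K V) V (Module.Dual K V) V
        (d ⊗ₜ[K] d) ∈
      subTensor K (annRel K R) (⊤ : Submodule K (V ⊗[K] V)) ⊔
        subTensor K (⊤ : Submodule K (Module.Dual K V ⊗[K] Module.Dual K V)) R := by
  set De := dualDistribEquiv K V V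
  set e := tensorTensorTensorComm K (Dual K V) V (Dual K V) V (d ⊗ₜ[K] d)
  have hcoev : TensorProduct.map De.toLinearMap LinearMap.id e =
      (dualTensorHomEquiv K (V ⊗[K] V) (V ⊗[K] V)).symm LinearMap.id := by
    rw [LinearEquiv.eq_symm_apply]
    change dualTensorHom K _ _ (TensorProduct.map (dualDistrib K V V) LinearMap.id e) =
      LinearMap.id
    rw [dualTensorHom_map_dualDistrib_tensorTensorTensorComm]
    change TensorProduct.map (dualTensorHomEquiv K V V d) (dualTensorHomEquiv K V V d) =
      LinearMap.id
    rw [hd, TensorProduct.map_id]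
  have hpull : e = TensorProduct.map De.symm.toLinearMap LinearMap.id
      (TensorProduct.map De.toLinearMap LinearMap.id e) := by
    rw [← comp_apply, ← TensorProduct.map_comp]
    simp
  have hann : R.dualAnnihilator.map De.symm.toLinearMap ≤ annRel K R := by
    rintro _ ⟨φ, hφ, rfl⟩
    change De (De.symm φ) ∈ R.dualAnnihilator
    rwa [LinearEquiv.apply_symm_apply]
  rw [hpull, hcoev]
  have hmap := Submodule.mem_map_of_mem (f := TensorProduct.map De.symm.toLinearMap LinearMap.id)
    (dualTensorHomEquiv_symm_id_mem_sup R)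
  rw [Submodule.map_sup] at hmap
  exact sup_le_sup (map_subTensor_le hann le_top)
    (map_subTensor_le le_top (Submodule.map_id R).le) hmap

end
end

section
/- Let K be a field and let (V, R), (W, S) be quadratic data over K. Let T = S₍₂₃₎(R^⊥ ⊗ (W ⊗ W) + (V* ⊗ V*) ⊗ S) ⊆ (V* ⊗ W) ⊗ (V* ⊗ W) be the relation space of the white product (V*, R^⊥) ∘ (W, S), and let ev : (V* ⊗ W) ⊗ V → W be the evaluation map (ξ ⊗ w) ⊗ v ↦ ξ(v)·w. Then ev is a morphism of quadratic data from the black product ((V* ⊗ W) ⊗ V, S₍₂₃₎(T ⊗ R)) to (W, S); that is, (ev ⊗ ev)(S₍₂₃₎(T ⊗ R)) ⊆ S. (This is the counit e : [B,C] • B → C of the internal hom adjunction in (QA, •).) -/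
/-!
On a generator `S₍₂₃₎(S₍₂₃₎(ρ ⊗ q) ⊗ r)` of the black relations, `ev ⊗ ev` pairs the
`V*`-factors of `ρ` against the `V`-factors of `r`, giving `⟨ρ, r⟩ • q`. For `r ∈ R` this
vanishes when `ρ ∈ R^⊥` and lies in `S` when `q ∈ S`, which covers both summands of the
white relations.
-/

open TensorProduct Module

noncomputable section

theorem subTensor_le_iff {K A B : Type} [Field K] [AddCommMonoid A] [AddCommMonoid B]
    [Module K A] [Module K B] {R : Submodule K A} {S : Submodule K B}
    {T : Submodule K (A ⊗[K] B)} :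
    subTensor K R S ≤ T ↔ ∀ a ∈ R, ∀ b ∈ S, a ⊗ₜ[K] b ∈ T := by
  refine ⟨fun h a ha b hb => h ⟨⟨a, ha⟩ ⊗ₜ ⟨b, hb⟩, rfl⟩, ?_⟩
  rintro h _ ⟨x, rfl⟩
  induction x using TensorProduct.induction_on with
  | zero => simp
  | tmul a b => exact h a a.2 b b.2
  | add x y hx hy => simpa only [map_add] using T.add_mem hx hy

theorem map_evaluation_tensorTensorTensorComm {K V W : Type} [CommSemiring K]
    [AddCommMonoid V] [AddCommMonoid W] [Module K V] [Module K W]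
    (ev : (Dual K V ⊗[K] W) ⊗[K] V →ₗ[K] W)
    (hev : ∀ (ξ : Dual K V) (w : W) (v : V), ev ((ξ ⊗ₜ[K] w) ⊗ₜ[K] v) = ξ v • w)
    (ρ : Dual K V ⊗[K] Dual K V) (q : W ⊗[K] W) (r : V ⊗[K] V) :
    map ev ev (tensorTensorTensorComm K _ _ V V
        (tensorTensorTensorComm K (Dual K V) (Dual K V) W W (ρ ⊗ₜ q) ⊗ₜ r)) =
      dualDistrib K V V ρ r • q := by
  induction ρ using TensorProduct.induction_on with
  | zero => simp
  | add a b ha hb => simp only [add_tmul, map_add, LinearMap.add_apply, ha, hb, add_smul]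
  | tmul ξ₁ ξ₂ =>
    induction q using TensorProduct.induction_on with
    | zero => simp
    | add a b ha hb => simp only [tmul_add, add_tmul, map_add, ha, hb, smul_add]
    | tmul w₁ w₂ =>
      induction r using TensorProduct.induction_on with
      | zero => simp
      | add a b ha hb => simp only [tmul_add, map_add, ha, hb, add_smul]
      | tmul v₁ v₂ =>
        simp only [tensorTensorTensorComm_tmul, map_tmul, hev, dualDistrib_apply]
        rw [smul_tmul', tmul_smul, smul_tmul', smul_smul, mul_comm]

theorem map_evaluation_whiteRel_annRel_tmul_mem {K V W : Type} [Field K]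
    [AddCommMonoid V] [AddCommMonoid W] [Module K V] [Module K W]
    {R : Submodule K (V ⊗[K] V)} {S : Submodule K (W ⊗[K] W)}
    (ev : (Dual K V ⊗[K] W) ⊗[K] V →ₗ[K] W)
    (hev : ∀ (ξ : Dual K V) (w : W) (v : V), ev ((ξ ⊗ₜ[K] w) ⊗ₜ[K] v) = ξ v • w)
    {t : (Dual K V ⊗[K] W) ⊗[K] (Dual K V ⊗[K] W)} (ht : t ∈ whiteRel K (annRel K R) S)
    {r : V ⊗[K] V} (hr : r ∈ R) :
    map ev ev (tensorTensorTensorComm K _ _ V V (t ⊗ₜ r)) ∈ S := by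
  obtain ⟨u, hu, rfl⟩ := ht
  let pairWith : (Dual K V ⊗[K] Dual K V) ⊗[K] (W ⊗[K] W) →ₗ[K] W ⊗[K] W :=
    map ev ev ∘ₗ (tensorTensorTensorComm K _ _ V V).toLinearMap ∘ₗ (mk K _ _).flip r ∘ₗ
      (tensorTensorTensorComm K (Dual K V) (Dual K V) W W).toLinearMap
  have pairWith_tmul (ρ : Dual K V ⊗[K] Dual K V) (q : W ⊗[K] W) :
      pairWith (ρ ⊗ₜ q) = dualDistrib K V V ρ r • q :=
    map_evaluation_tensorTensorTensorComm ev hev ρ q r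
  suffices h : _ ⊔ _ ≤ S.comap pairWith from h hu
  refine sup_le ?_ ?_ <;> rw [subTensor_le_iff]
  · intro ρ hρ q _
    rw [Submodule.mem_comap, pairWith_tmul,
      (Submodule.mem_dualAnnihilator _).mp (Submodule.mem_comap.mp hρ) r hr, zero_smul]
    exact S.zero_mem
  · intro ρ _ q hq
    rw [Submodule.mem_comap, pairWith_tmul]
    exact S.smul_mem _ hq

theorem evaluation_isQuadMor_general (K : Type) [Field K]
    (V W : Type) [AddCommGroup V] [AddCommGroup W] [Module K V] [Module K W]
    (R : Submodule K (V ⊗[K] V)) (S : Submodule K (W ⊗[K] W))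
    (ev : ((Module.Dual K V ⊗[K] W) ⊗[K] V) →ₗ[K] W)
    (hev : ∀ (ξ : Module.Dual K V) (w : W) (v : V), ev ((ξ ⊗ₜ[K] w) ⊗ₜ[K] v) = ξ v • w) :
    IsQuadMor K (blackRel K (whiteRel K (annRel K R) S) R) S ev := by
  rw [IsQuadMor, blackRel, ← Submodule.map_comp, Submodule.map_le_iff_le_comap,
    subTensor_le_iff]
  exact fun t ht r hr => map_evaluation_whiteRel_annRel_tmul_mem ev hev ht hr

/-- The evaluation map `ev : ((V* ⊗ W) ⊗ V) → W` is a morphism of quadratic data from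
the black product `((V*,R^⊥) ∘ (W,S)) • (V,R)` to `(W,S)`: the counit
`e : [B,C] • B → C` of the internal hom adjunction in `(QA, •)`. -/
theorem evaluation_isQuadMor (K : Type) [Field K]
    (V W : Type) [AddCommGroup V] [AddCommGroup W] [Module K V] [Module K W] [FiniteDimensional K V] [FiniteDimensional K W]
    (R : Submodule K (V ⊗[K] V)) (S : Submodule K (W ⊗[K] W))
    (ev : ((Module.Dual K V ⊗[K] W) ⊗[K] V) →ₗ[K] W)
    (hev : ∀ (ξ : Module.Dual K V) (w : W) (v : V), ev ((ξ ⊗ₜ[K] w) ⊗ₜ[K] v) = ξ v • w) :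
    IsQuadMor K (blackRel K (whiteRel K (annRel K R) S) R) S ev :=
  evaluation_isQuadMor_general K V W R S ev hev

end
end

section
/- Let K be a field, let V and W be finite-dimensional K-vector spaces, and let R ⊆ V ⊗ V and S ⊆ W ⊗ W be subspaces. Under the canonical isomorphism ((V ⊗ W) ⊗ (V ⊗ W))* ≅ (V* ⊗ W*) ⊗ (V* ⊗ W*) induced by the canonical isomorphism (V ⊗ W)* ≅ V* ⊗ W*, the annihilator of the subspace S₍₂₃₎(R ⊗ S) ⊆ (V ⊗ W) ⊗ (V ⊗ W) corresponds to the subspace S₍₂₃₎(R^⊥ ⊗ (W* ⊗ W*) + (V* ⊗ V*) ⊗ S^⊥) ⊆ (V* ⊗ W*) ⊗ (V* ⊗ W*). In other words, ((V,R) • (W,S))^! = (V,R)^! ∘ (W,S)^!: the duality functor interchanges the black and white products of quadratic data. -/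
open TensorProduct Module

noncomputable section

/-! Dualizing the inclusion `R ⊗ S ↪ A ⊗ B` gives `A* ⊗ B* → R* ⊗ S*`, the tensor product of the
restriction maps `A* → R*` and `B* → S*`. These are surjective with kernels `R^⊥` and `S^⊥`, so by
right exactness of `⊗` the kernel is `R^⊥ ⊗ B* + A* ⊗ S^⊥`; in finite dimensions
`R* ⊗ S* ≅ (R ⊗ S)*`, so this kernel is the annihilator of `R ⊗ S`. Taking `A = V ⊗ V`,
`B = W ⊗ W` and transporting along `S₍₂₃₎`, which commutes with the identifications
`(X ⊗ Y)* ≅ X* ⊗ Y*`, gives the theorem. -/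

open LinearMap

lemma Submodule.dualAnnihilator_map {R M N : Type} [CommSemiring R] [AddCommMonoid M]
    [AddCommMonoid N] [Module R M] [Module R N] (f : M →ₗ[R] N) (U : Submodule R M) :
    (U.map f).dualAnnihilator = U.dualAnnihilator.comap f.dualMap := by
  ext φ
  simp [Submodule.mem_dualAnnihilator]

lemma exact_subtype_dualAnnihilator_dualMap_subtype {K A : Type} [CommSemiring K]
    [AddCommMonoid A] [Module K A] (R : Submodule K A) :
    Function.Exact R.dualAnnihilator.subtype R.subtype.dualMap := by
  rw [exact_iff, ker_dualMap_eq_dualAnnihilator_range, Submodule.range_subtype,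
    Submodule.range_subtype]

section subTensor

variable {K : Type} [Field K] {A B : Type}

lemma subTensor_map {A' B' : Type} [AddCommMonoid A] [AddCommMonoid B]
    [AddCommMonoid A'] [AddCommMonoid B'] [Module K A] [Module K B] [Module K A'] [Module K B']
    (f : A →ₗ[K] A') (g : B →ₗ[K] B') (R : Submodule K A) (S : Submodule K B) :
    (subTensor K R S).map (TensorProduct.map f g) = subTensor K (R.map f) (S.map g) := by
  rw [subTensor, subTensor, ← range_comp, ← map_comp, range_map, range_map, range_comp,
    range_comp, Submodule.range_subtype, Submodule.range_subtype, Submodule.range_subtype,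
    Submodule.range_subtype]

variable [AddCommGroup A] [AddCommGroup B] [Module K A] [Module K B]

lemma subTensor_top_right_s5 (R : Submodule K A) :
    subTensor K R (⊤ : Submodule K B) = range (rTensor B R.subtype) := by
  rw [subTensor, rTensor, range_map, range_map, range_id, Submodule.range_subtype,
    Submodule.range_subtype]

lemma subTensor_top_left_s5 (S : Submodule K B) :
    subTensor K (⊤ : Submodule K A) S = range (lTensor A S.subtype) := by
  rw [subTensor, lTensor, range_map, range_map, range_id, Submodule.range_subtype,
    Submodule.range_subtype]

lemma comap_dualDistrib_dualAnnihilator_subTensor [FiniteDimensional K A]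
    [FiniteDimensional K B] (R : Submodule K A) (S : Submodule K B) :
    (subTensor K R S).dualAnnihilator.comap (dualDistrib K A B)
      = subTensor K R.dualAnnihilator ⊤ ⊔ subTensor K ⊤ S.dualAnnihilator := by
  have hnat : (TensorProduct.map R.subtype S.subtype).dualMap ∘ₗ dualDistrib K A B
      = dualDistrib K R S ∘ₗ TensorProduct.map R.subtype.dualMap S.subtype.dualMap := by
    ext φ ψ r s
    simp [dualDistrib_apply]
  have hker := @TensorProduct.map_ker K R.dualAnnihilator (Dual K A) (Dual K R)
    _ _ _ _ _ _ _ R.dualAnnihilator.subtype R.subtype.dualMap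
    (exact_subtype_dualAnnihilator_dualMap_subtype R)
    (dualMap_surjective_of_injective R.injective_subtype)
    S.dualAnnihilator (Dual K B) (Dual K S) _ _ _ _ _ _
    S.dualAnnihilator.subtype S.subtype.dualMap
    (exact_subtype_dualAnnihilator_dualMap_subtype S)
    (dualMap_surjective_of_injective S.injective_subtype)
  rw [subTensor, ← ker_dualMap_eq_dualAnnihilator_range, ← ker_comp, hnat, ker_comp,
    ker_eq_bot_of_injective (f := dualDistrib K R S) (dualDistribEquiv K R S).injective,
    Submodule.comap_bot, hker, subTensor_top_right_s5, subTensor_top_left_s5, sup_comm]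

end subTensor

lemma annRel_eq_map_dualAnnihilator (K : Type) [Field K] {V : Type} [AddCommGroup V] [Module K V]
    [FiniteDimensional K V] (R : Submodule K (V ⊗[K] V)) :
    annRel K R = R.dualAnnihilator.map (dualDistribEquiv K V V).symm.toLinearMap :=
  Submodule.comap_equiv_eq_map_symm (dualDistribEquiv K V V) R.dualAnnihilator

lemma dualMap_tensorTensorTensorComm_comp_dualDistrib (K : Type) [CommSemiring K] (M N P Q : Type)
    [AddCommMonoid M] [AddCommMonoid N] [AddCommMonoid P] [AddCommMonoid Q]
    [Module K M] [Module K N] [Module K P] [Module K Q] :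
    (tensorTensorTensorComm K M N P Q).toLinearMap.dualMap ∘ₗ dualDistrib K (M ⊗[K] P) (N ⊗[K] Q)
        ∘ₗ TensorProduct.map (dualDistrib K M P) (dualDistrib K N Q)
      = (dualDistrib K (M ⊗[K] N) (P ⊗[K] Q)
          ∘ₗ TensorProduct.map (dualDistrib K M N) (dualDistrib K P Q))
        ∘ₗ (tensorTensorTensorComm K (Dual K M) (Dual K N) (Dual K P) (Dual K Q)).symm.toLinearMap := by
  apply TensorProduct.ext_fourfold'
  intro f g h k
  apply TensorProduct.ext_fourfold'
  intro m n p q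
  simp [dualDistrib_apply]
  ring

/-- `((V,R) • (W,S))^! = (V,R)^! ∘ (W,S)^!`: under the canonical isomorphism
`(V ⊗ W)* ≅ V* ⊗ W*`, the annihilator of the black product relation `S₍₂₃₎(R ⊗ S)`
corresponds to the white product relation `S₍₂₃₎(R^⊥ ⊗ (W* ⊗ W*) + (V* ⊗ V*) ⊗ S^⊥)`. -/
theorem black_dual_eq_white_of_duals (K : Type) [Field K]
    (V W : Type) [AddCommGroup V] [AddCommGroup W] [Module K V] [Module K W] [FiniteDimensional K V] [FiniteDimensional K W]
    (R : Submodule K (V ⊗[K] V)) (S : Submodule K (W ⊗[K] W)) :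
    Submodule.comap
        (TensorProduct.map (TensorProduct.dualDistribEquiv K V W).toLinearMap
          (TensorProduct.dualDistribEquiv K V W).toLinearMap)
        (annRel K (blackRel K R S))
      = whiteRel K (annRel K R) (annRel K S) := by
  set T' := tensorTensorTensorComm K (Dual K V) (Dual K V) (Dual K W) (Dual K W)
  set eV := dualDistribEquiv K V V
  set eW := dualDistribEquiv K W W
  calc _ = (subTensor K R S).dualAnnihilator.comap
          ((tensorTensorTensorComm K V V W W).toLinearMap.dualMap ∘ₗ dualDistrib K _ _
            ∘ₗ TensorProduct.map (dualDistrib K V W) (dualDistrib K V W)) := by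
        rw [annRel, blackRel, Submodule.dualAnnihilator_map, Submodule.comap_comp,
          Submodule.comap_comp]
        rfl
    _ = (((subTensor K R S).dualAnnihilator.comap (dualDistrib K _ _)).comap
          (TensorProduct.map eV.toLinearMap eW.toLinearMap)).map T'.toLinearMap := by
        rw [dualMap_tensorTensorTensorComm_comp_dualDistrib, Submodule.comap_comp,
          Submodule.comap_comp, Submodule.comap_equiv_eq_map_symm, LinearEquiv.symm_symm]
        rfl
    _ = ((subTensor K R.dualAnnihilator ⊤ ⊔ subTensor K ⊤ S.dualAnnihilator).map
          (TensorProduct.map eV.symm.toLinearMap eW.symm.toLinearMap)).map T'.toLinearMap := by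
        rw [comap_dualDistrib_dualAnnihilator_subTensor]
        exact congrArg _ (Submodule.comap_equiv_eq_map_symm (TensorProduct.congr eV eW) _)
    _ = _ := by
        rw [whiteRel, annRel_eq_map_dualAnnihilator, annRel_eq_map_dualAnnihilator,
          Submodule.map_sup, subTensor_map, subTensor_map, Submodule.map_top, Submodule.map_top,
          LinearEquiv.range, LinearEquiv.range]

end
end

section
/- Let K be a field and let f : (V, R) → (V', R') and g : (W, S) → (W', S') be morphisms of quadratic data over K. Then the linear map f ⊗ g : V ⊗ W → V' ⊗ W' is a morphism of quadratic data from the white product (V ⊗ W, S₍₂₃₎(R ⊗ (W ⊗ W) + (V ⊗ V) ⊗ S)) to the white product (V' ⊗ W', S₍₂₃₎(R' ⊗ (W' ⊗ W') + (V' ⊗ V') ⊗ S')); that is, ((f ⊗ g) ⊗ (f ⊗ g))(S₍₂₃₎(R ⊗ (W ⊗ W) + (V ⊗ V) ⊗ S)) ⊆ S₍₂₃₎(R' ⊗ (W' ⊗ W') + (V' ⊗ V') ⊗ S'). (Hence the white product is a bifunctor on the category of quadratic data.) -/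
open TensorProduct Module

noncomputable section

lemma map_subTensor_le_s8 (K : Type) [Field K] {A B A' B' : Type}
    [AddCommMonoid A] [AddCommMonoid B] [AddCommMonoid A'] [AddCommMonoid B']
    [Module K A] [Module K B] [Module K A'] [Module K B']
    {R : Submodule K A} {S : Submodule K B} {R' : Submodule K A'} {S' : Submodule K B'}
    {F : A →ₗ[K] A'} {G : B →ₗ[K] B'}
    (hF : Submodule.map F R ≤ R') (hG : Submodule.map G S ≤ S') :
    Submodule.map (TensorProduct.map F G) (subTensor K R S) ≤ subTensor K R' S' := by
  have hFR : ∀ x ∈ R, F x ∈ R' := fun x hx => hF ⟨x, hx, rfl⟩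
  have hGS : ∀ y ∈ S, G y ∈ S' := fun y hy => hG ⟨y, hy, rfl⟩
  have hfactor : TensorProduct.map F G ∘ₗ TensorProduct.map R.subtype S.subtype =
      TensorProduct.map R'.subtype S'.subtype ∘ₗ
        TensorProduct.map (F.restrict hFR) (G.restrict hGS) := by
    rw [← TensorProduct.map_comp, ← TensorProduct.map_comp]
    rfl
  rw [subTensor, subTensor, ← LinearMap.range_comp, hfactor]
  exact LinearMap.range_comp_le_range _ _

theorem whiteRel_map_general (K : Type) [Field K]
    (V V' W W' : Type) [AddCommGroup V] [AddCommGroup V'] [AddCommGroup W] [AddCommGroup W'] [Module K V] [Module K V'] [Module K W] [Module K W']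
    (R : Submodule K (V ⊗[K] V)) (R' : Submodule K (V' ⊗[K] V'))
    (S : Submodule K (W ⊗[K] W)) (S' : Submodule K (W' ⊗[K] W'))
    (f : V →ₗ[K] V') (g : W →ₗ[K] W')
    (hf : IsQuadMor K R R' f) (hg : IsQuadMor K S S' g) :
    IsQuadMor K (whiteRel K R S) (whiteRel K R' S') (TensorProduct.map f g) := by
  -- naturality of `S₍₂₃₎` turns `(f ⊗ g) ⊗ (f ⊗ g)` into `(f ⊗ f) ⊗ (g ⊗ g)` on its source
  rw [IsQuadMor, whiteRel, whiteRel, ← Submodule.map_comp,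
    ← TensorProduct.tensorTensorTensorComm_comp_map, Submodule.map_comp, Submodule.map_sup]
  exact Submodule.map_mono <|
    sup_le_sup (map_subTensor_le_s8 K hf le_top) (map_subTensor_le_s8 K le_top hg)

/-- The white product is a bifunctor: `f ⊗ g` is a morphism of quadratic data between
the white products whenever `f` and `g` are morphisms of quadratic data. -/
theorem whiteRel_map (K : Type) [Field K]
    (V V' W W' : Type) [AddCommGroup V] [AddCommGroup V'] [AddCommGroup W] [AddCommGroup W'] [Module K V] [Module K V'] [Module K W] [Module K W'] [FiniteDimensional K V] [FiniteDimensional K V'] [FiniteDimensional K W] [FiniteDimensional K W']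
    (R : Submodule K (V ⊗[K] V)) (R' : Submodule K (V' ⊗[K] V'))
    (S : Submodule K (W ⊗[K] W)) (S' : Submodule K (W' ⊗[K] W'))
    (f : V →ₗ[K] V') (g : W →ₗ[K] W')
    (hf : IsQuadMor K R R' f) (hg : IsQuadMor K S S' g) :
    IsQuadMor K (whiteRel K R S) (whiteRel K R' S') (TensorProduct.map f g) :=
  whiteRel_map_general K V V' W W' R R' S S' f g hf hg

end
end
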